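/- More generally, if L₁,…,Lₙ are symplectic 2d×2d real matrices and k ≥ 1, then Tr((∑ᵢ (Lᵢᵀ Lᵢ)⁻¹)ᵏ) = Tr((∑ᵢ Lᵢᵀ Lᵢ)ᵏ). -/

import Mathlib

open Matrix Finset

/-!
A symplectic `L` is invertible with `L⁻¹ = J⁻¹ Lᵀ J`, so `Lᵀ` is symplectic as well, and then
`(LᵀL)⁻¹ = J⁻¹ (LᵀL) J`. Summing over `i`, `∑ (LᵢᵀLᵢ)⁻¹` is conjugate by `J` to `∑ LᵢᵀLᵢ`,
so their powers are conjugate and have the same trace.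
-/

section Symplectic

variable {m R : Type*} [Fintype m] [DecidableEq m] [CommRing R] {J L : Matrix m m R}

def unitOfMulSelfEqNegOne (hJ : J * J = -1) : (Matrix m m R)ˣ where
  val := J
  inv := -J
  val_inv := by rw [mul_neg, hJ, neg_neg]
  inv_val := by rw [neg_mul, hJ, neg_neg]

theorem mul_mul_transpose_eq_of_transpose_mul_mul_eq (hJ : J * J = -1)
    (hL : Lᵀ * J * L = J) : L * J * Lᵀ = J := by
  have hLeft : (-J * Lᵀ * J) * L = 1 :=
    calc (-J * Lᵀ * J) * L = -J * (Lᵀ * J * L) := by noncomm_ring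
      _ = 1 := by rw [hL, neg_mul, hJ, neg_neg]
  calc L * J * Lᵀ = L * (-J * Lᵀ * J) * J := by
        simp only [Matrix.mul_assoc, hJ, Matrix.mul_neg, Matrix.neg_mul, Matrix.mul_one, neg_neg]
    _ = J := by rw [mul_eq_one_comm.mp hLeft, Matrix.one_mul]

theorem inv_transpose_mul_self_eq_of_transpose_mul_mul_eq (hJ : J * J = -1)
    (hL : Lᵀ * J * L = J) : (Lᵀ * L)⁻¹ = -J * (Lᵀ * L) * J := by
  refine Matrix.inv_eq_right_inv ?_
  calc Lᵀ * L * (-J * (Lᵀ * L) * J) = -(Lᵀ * (L * J * Lᵀ) * L * J) := by noncomm_ring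
    _ = 1 := by rw [mul_mul_transpose_eq_of_transpose_mul_mul_eq hJ hL, hL, hJ, neg_neg]

theorem sum_inv_transpose_mul_self_eq_conj {ι : Type*} (s : Finset ι) (hJ : J * J = -1)
    {L : ι → Matrix m m R} (hL : ∀ i ∈ s, (L i)ᵀ * J * L i = J) :
    ∑ i ∈ s, ((L i)ᵀ * L i)⁻¹ =
      (↑(unitOfMulSelfEqNegOne hJ)⁻¹ : Matrix m m R) * (∑ i ∈ s, (L i)ᵀ * L i) *
        (↑(unitOfMulSelfEqNegOne hJ) : Matrix m m R) := by
  rw [Finset.mul_sum, Finset.sum_mul]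
  exact Finset.sum_congr rfl fun i hi =>
    inv_transpose_mul_self_eq_of_transpose_mul_mul_eq hJ (hL i hi)

end Symplectic

theorem trace_pow_sum_inv_eq_trace_pow_sum_of_symplectic_general
    (d n k : ℕ)
    (J : Matrix (Fin (2 * d)) (Fin (2 * d)) ℝ)
    (hJ2 : J * J = -1)
    (L : Fin n → Matrix (Fin (2 * d)) (Fin (2 * d)) ℝ)
    (hL : ∀ i, (L i)ᵀ * J * L i = J) :
    ((∑ i, ((L i)ᵀ * L i)⁻¹) ^ k).trace = ((∑ i, (L i)ᵀ * L i) ^ k).trace := by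
  rw [sum_inv_transpose_mul_self_eq_conj _ hJ2 fun i _ => hL i, Units.conj_pow',
    trace_units_conj']

/-- For symplectic matrices L₁,…,Lₙ and k ≥ 1,
Tr((∑ᵢ (LᵢᵀLᵢ)⁻¹)ᵏ) = Tr((∑ᵢ LᵢᵀLᵢ)ᵏ). -/
theorem trace_pow_sum_inv_eq_trace_pow_sum_of_symplectic
    (d n k : ℕ) (hk : 1 ≤ k)
    (J : Matrix (Fin (2 * d)) (Fin (2 * d)) ℝ)
    (hJt : Jᵀ = -J) (hJ2 : J * J = -1)
    (L : Fin n → Matrix (Fin (2 * d)) (Fin (2 * d)) ℝ)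
    (hL : ∀ i, (L i)ᵀ * J * L i = J) :
    ((∑ i, ((L i)ᵀ * L i)⁻¹) ^ k).trace = ((∑ i, (L i)ᵀ * L i) ^ k).trace :=
  trace_pow_sum_inv_eq_trace_pow_sum_of_symplectic_general d n k J hJ2 L hL
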